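/- Let M be a connected simple matroid of rank 3 on a finite ground set E, and let M' be a connected matroid on E whose every base is a base of M. Suppose A ⊆ E is a flat of M' with r_{M'}(A) = 2, and let B ⊆ E be a nonempty set disjoint from A. Then every connected component C of the graph g(B,A) satisfies r_{M'}(C) = 1. -/

import Mathlib

open Set Matroid

namespace PaperWMO

variable {α : Type*}

/-- The rank of a set `X` in a matroid `M`: the size of a largest independent subset of `X`. -/
noncomputable def rk (M : Matroid α) (X : Set α) : ℕ :=
  sSup {n : ℕ | ∃ I, M.Indep I ∧ I ⊆ X ∧ I.ncard = n}

/-- Contraction of the set `C` in the matroid `M`, defined by duality: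
`M / C = (M✶ \ C)✶`, where deletion is restriction to the complement. -/
noncomputable def contract (M : Matroid α) (C : Set α) : Matroid α :=
  (M✶ ↾ (M.E \ C))✶

/-- A matroid is connected if its ground set is nonempty and it is not the direct sum of
two matroids on nonempty disjoint ground sets. -/
def Conn (M : Matroid α) : Prop :=
  M.E.Nonempty ∧ ¬ ∃ (M₁ M₂ : Matroid α) (h : Disjoint M₁.E M₂.E),
    M₁.E.Nonempty ∧ M₂.E.Nonempty ∧ M = Matroid.disjointSum M₁ M₂ h

/-- A flat of `M`: a subset `F` of the ground set such that any superset
`B` with `F ⊆ B ⊆ M.E` of the same rank equals `F`. -/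
def IsFlat (M : Matroid α) (F : Set α) : Prop :=
  F ⊆ M.E ∧ ∀ B : Set α, F ⊆ B → B ⊆ M.E → rk M B = rk M F → B = F

/-- A matroid is simple if every subset of the ground set with at most two elements
is independent. -/
def IsSimple (M : Matroid α) : Prop :=
  ∀ X ⊆ M.E, X.ncard ≤ 2 → M.Indep X

/-- A facet-defining flat of rank 2: a flat `F` of rank 2 such that
both the restriction `M ↾ F` and the contraction `M / F` are connected. -/
def FacetFlat2 (M : Matroid α) (F : Set α) : Prop :=
  IsFlat M F ∧ rk M F = 2 ∧ Conn (M ↾ F) ∧ Conn (contract M F)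

/-- `M` is 2-decomposable by the hyperplane `(A, a)_=`. -/
def TwoDecomposableBy (M : Matroid α) (A : Set α) (a : ℕ) : Prop :=
  (∃ N₁ : Matroid α, N₁.E = M.E ∧
      ∀ B : Set α, N₁.IsBase B ↔ M.IsBase B ∧ (B ∩ A).ncard ≤ a) ∧
  (∃ N₂ : Matroid α, N₂.E = M.E ∧
      ∀ B : Set α, N₂.IsBase B ↔ M.IsBase B ∧ a ≤ (B ∩ A).ncard) ∧
  (∃ B : Set α, M.IsBase B ∧ a < (B ∩ A).ncard) ∧
  (∃ B : Set α, M.IsBase B ∧ (B ∩ A).ncard < a)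

/-- A 3-partition in `M`: a partition of the ground set into three parts, each of size
at least two, such that no facet-defining flat of rank 2 meets all three parts, and the
union of any two parts has rank 3. -/
def ThreePartition (M : Matroid α) (A₁ A₂ A₃ : Set α) : Prop :=
  A₁ ∪ A₂ ∪ A₃ = M.E ∧
  Disjoint A₁ A₂ ∧ Disjoint A₂ A₃ ∧ Disjoint A₁ A₃ ∧
  2 ≤ A₁.ncard ∧ 2 ≤ A₂.ncard ∧ 2 ≤ A₃.ncard ∧
  (¬ ∃ F : Set α, FacetFlat2 M F ∧
      (F ∩ A₁).Nonempty ∧ (F ∩ A₂).Nonempty ∧ (F ∩ A₃).Nonempty) ∧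
  rk M (A₁ ∪ A₂) = 3 ∧ rk M (A₂ ∪ A₃) = 3 ∧ rk M (A₃ ∪ A₁) = 3

/-- The adjacency relation of the graph `g(A, B)` (with respect to the matroid `M`):
the vertex set is `B`, and distinct `x, y ∈ B` are adjacent iff some facet-defining flat
of rank 2 of `M` contains both `x` and `y` and meets `A`. -/
def gAdj (M : Matroid α) (A B : Set α) (x y : α) : Prop :=
  x ∈ B ∧ y ∈ B ∧ x ≠ y ∧
    ∃ F : Set α, FacetFlat2 M F ∧ x ∈ F ∧ y ∈ F ∧ (F ∩ A).Nonempty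

/-- `C` is the vertex set of a connected component of the graph `g(S, V)`. -/
def IsGComponent (M : Matroid α) (S V C : Set α) : Prop :=
  ∃ x ∈ V, C = {y | y ∈ V ∧ Relation.ReflTransGen (gAdj M S V) x y}

/-! If `y, z ∈ A` lie on a rank-2 flat `F` of `M` together with some `b ∉ A`, then `{b, y, z}`
has `M`-rank at most 2, hence `M'`-rank at most 2, because independent sets of `M'` are
independent in `M`. Since `A` is a flat of `M'`, `b` is not in the `M'`-closure of `{y, z}`, so
`{y, z}` has `M'`-rank 1 and `z` is `M'`-parallel to `y`. Hence a component of `g(B, A)` lies in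
the `M'`-closure of any of its points, and these are nonloops since `M'` is connected with at
least two elements. -/

variable {M N : Matroid α} {A F X I : Set α} {b e x y z : α}

lemma rk_eq_eRk [M.RankFinite] (X : Set α) : (rk M X : ℕ∞) = M.eRk X := by
  obtain ⟨I, hI⟩ := M.exists_isBasis' X
  have hmax : IsGreatest {n : ℕ | ∃ J, M.Indep J ∧ J ⊆ X ∧ J.ncard = n} I.ncard := by
    refine ⟨⟨I, hI.indep, hI.subset, rfl⟩, ?_⟩
    rintro n ⟨J, hJ, hJX, rfl⟩
    rw [← Nat.cast_le (α := ℕ∞), hJ.finite.cast_ncard_eq, hI.indep.finite.cast_ncard_eq,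
      hI.encard_eq_eRk]
    exact hJ.encard_le_eRk_of_subset hJX
  rw [rk, hmax.csSup_eq, hI.indep.finite.cast_ncard_eq, hI.encard_eq_eRk]

lemma rk_eq_iff [M.RankFinite] {n : ℕ} : rk M X = n ↔ M.eRk X = n := by
  rw [← rk_eq_eRk, Nat.cast_inj]

lemma IsFlat.isFlat [M.RankFinite] (hF : IsFlat M F) : M.IsFlat F := by
  refine isFlat_iff_closure_eq.2 (hF.2 _ (M.subset_closure F hF.1) (M.closure_subset_ground F) ?_)
  rw [← Nat.cast_inj (R := ℕ∞), rk_eq_eRk, rk_eq_eRk, eRk_closure_eq]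

lemma _root_.Matroid.eq_disjointSum_of_isLoop (he : M.IsLoop e) :
    M = (M ↾ {e}).disjointSum (M ↾ (M.E \ {e})) disjoint_sdiff_right := by
  have hE : {e} ∪ (M.E \ {e}) = M.E := union_sdiff_cancel (singleton_subset_iff.2 he.mem_ground)
  refine ext_indep (hE.symm.trans
    (disjointSum_ground_eq (M := M ↾ {e}) (N := M ↾ (M.E \ {e}))).symm) fun I hI ↦ ?_
  refine Iff.trans ?_ (disjointSum_indep_iff ..).symm
  simp only [restrict_indep_iff, restrict_ground_eq]
  constructor
  · intro hI'
    exact ⟨⟨hI'.subset inter_subset_left, inter_subset_right⟩,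
      ⟨hI'.subset inter_subset_left, inter_subset_right⟩, hI.trans hE.superset⟩
  · rintro ⟨⟨h1, -⟩, ⟨h2, -⟩, -⟩
    have heI : e ∉ I :=
      fun heI ↦ he.not_indep_of_mem (show e ∈ I ∩ {e} from ⟨heI, rfl⟩) h1
    rwa [inter_eq_self_of_subset_left (subset_sdiff_singleton hI heI)] at h2

lemma Conn.isNonloop (hM : Conn M) (hE : M.E.Nontrivial) (he : e ∈ M.E) :
    M.IsNonloop e := by
  refine (M.isLoop_or_isNonloop e).resolve_left fun hloop ↦ hM.2 ?_
  obtain ⟨f, hf, hfe⟩ := hE.exists_ne e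
  exact ⟨M ↾ {e}, M ↾ (M.E \ {e}), _, singleton_nonempty e, ⟨f, hf, hfe⟩,
    eq_disjointSum_of_isLoop hloop⟩

section BaseInclusion

variable (hsub : ∀ B, N.IsBase B → M.IsBase B)
include hsub

lemma _root_.Matroid.Indep.of_forall_isBase_imp (hI : N.Indep I) : M.Indep I := by
  obtain ⟨B, hB, hIB⟩ := hI.exists_isBase_superset
  exact (hsub B hB).indep.subset hIB

lemma _root_.Matroid.eRk_le_of_forall_isBase_imp (X : Set α) : N.eRk X ≤ M.eRk X := by
  refine eRk_le_iff.2 fun J (hJX : J ⊆ X) (hJ : N.Indep J) ↦ ?_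
  exact (hJ.of_forall_isBase_imp hsub).encard_le_eRk_of_subset hJX

lemma _root_.Matroid.mem_closure_singleton_of_eRk_le_two (hA : N.IsFlat A) (hy : N.IsNonloop y)
    (hyA : y ∈ A) (hzA : z ∈ A) (hbE : b ∈ N.E) (hbA : b ∉ A)
    (hF : M.eRk F ≤ 2) (hbF : b ∈ F) (hyF : y ∈ F) (hzF : z ∈ F) : z ∈ N.closure {y} := by
  by_contra hz
  have hb : b ∉ N.closure {z, y} :=
    fun h ↦ hbA (hA.closure ▸ N.closure_subset_closure (pair_subset hzA hyA) h)
  have h3 : N.eRk {b, z, y} = 3 := by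
    rw [eRk_insert_eq_add_one ⟨hbE, hb⟩, eRk_insert_eq_add_one ⟨hA.subset_ground hzA, hz⟩,
      hy.eRk_eq]
    rfl
  have h2 : N.eRk {b, z, y} ≤ 2 :=
    (eRk_le_of_forall_isBase_imp hsub _).trans
      ((M.eRk_mono (insert_subset hbF (pair_subset hzF hyF))).trans hF)
  exact absurd (h3 ▸ h2) (by decide)

end BaseInclusion

lemma _root_.Matroid.mem_closure_singleton_of_reflTransGen {r : α → α → Prop}
    (hr : ∀ y z, r y z → z ∈ M.closure {y}) (hx : x ∈ M.E)
    (h : Relation.ReflTransGen r x y) : y ∈ M.closure {x} := by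
  induction h with
  | refl => exact M.mem_closure_of_mem' rfl hx
  | tail _ hyz ih =>
    exact M.closure_subset_closure_of_subset_closure (singleton_subset_iff.2 ih) (hr _ _ hyz)

lemma mem_closure_of_gAdj [M.RankFinite] (hE : N.E = M.E)
    (hsub : ∀ B, N.IsBase B → M.IsBase B) (hA : N.IsFlat A) (hAB : Disjoint A B)
    (hnonloop : ∀ y ∈ A, N.IsNonloop y) (h : gAdj M B A y z) : z ∈ N.closure {y} := by
  obtain ⟨hyA, hzA, -, F, hF, hyF, hzF, b, hbF, hbB⟩ := h
  have hF2 : M.eRk F = 2 := rk_eq_iff.1 hF.2.1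
  exact mem_closure_singleton_of_eRk_le_two hsub hA (hnonloop y hyA) hyA hzA (hE ▸ hF.1.1 hbF)
    (hAB.notMem_of_mem_right hbB) hF2.le hbF hyF hzF

theorem component_rank_one_general (M M' : Matroid α) (hfin : M.E.Finite)
    (hE : M'.E = M.E) (hconn' : Conn M')
    (hsub : ∀ B : Set α, M'.IsBase B → M.IsBase B)
    (A : Set α) (hflat : IsFlat M' A) (hrA : rk M' A = 2)
    (B : Set α) (hdisj : Disjoint A B)
    (C : Set α) (hC : IsGComponent M B A C) :
    rk M' C = 1 := by
  have : M.Finite := ⟨hfin⟩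
  have : M'.Finite := ⟨hE ▸ hfin⟩
  have hA := hflat.isFlat
  have hAnt : A.Nontrivial := by
    rw [← one_lt_encard_iff_nontrivial]
    calc (1 : ℕ∞) < 2 := by norm_num
      _ = M'.eRk A := by rw [← rk_eq_eRk, hrA]; rfl
      _ ≤ A.encard := M'.eRk_le_encard A
  have hnonloop : ∀ y ∈ A, M'.IsNonloop y := fun y hy ↦
    hconn'.isNonloop (hAnt.mono hA.subset_ground) (hA.subset_ground hy)
  obtain ⟨x, hxA, rfl⟩ := hC
  rw [rk_eq_iff, Nat.cast_one, eRk_eq_one_iff (fun y hy ↦ hA.subset_ground hy.1)]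
  refine ⟨x, ⟨hxA, .refl⟩, hnonloop x hxA, fun y hy ↦ ?_⟩
  exact mem_closure_singleton_of_reflTransGen
    (fun _ _ ↦ mem_closure_of_gAdj hE hsub hA hdisj hnonloop) (hA.subset_ground hxA) hy.2

/-- If `A` is a rank-2 flat of an included matroid `M'` and `B` is a nonempty set
disjoint from `A`, then every connected component of the graph `g(B,A)` has rank 1
in `M'`. -/
theorem component_rank_one (M M' : Matroid α) (hfin : M.E.Finite)
    (hconn : Conn M) (hsimple : IsSimple M) (hrank : rk M M.E = 3)
    (hE : M'.E = M.E) (hconn' : Conn M')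
    (hsub : ∀ B : Set α, M'.IsBase B → M.IsBase B)
    (A : Set α) (hflat : IsFlat M' A) (hrA : rk M' A = 2)
    (B : Set α) (hBne : B.Nonempty) (hBE : B ⊆ M.E) (hdisj : Disjoint A B)
    (C : Set α) (hC : IsGComponent M B A C) :
    rk M' C = 1 :=
  component_rank_one_general M M' hfin hE hconn' hsub A hflat hrA B hdisj C hC

end PaperWMO
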